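/- Let G be a finite group, H a subgroup of G, and A a normal subgroup of G with H ≤ A ≤ G. Then A is a perfect code of the pair (G,H) if and only if G = A·N_G(H) and for every x ∈ G with x² ∈ A there exists b ∈ A such that xb ∈ N_G(H) and (xb)² ∈ H. -/

import Mathlib

open scoped Pointwise

/-- A subset `C` of the vertices of a graph `Γ` is an `(r,s)`-regular set if every vertex
in `C` has exactly `r` neighbours in `C` and every vertex outside `C` has exactly `s`
neighbours in `C`. -/
def IsRegularVertexSet {V : Type*} (Γ : SimpleGraph V) (C : Set V) (r s : ℕ) : Prop :=
  (∀ v ∈ C, {w | w ∈ C ∧ Γ.Adj v w}.ncard = r) ∧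
  ∀ v ∉ C, {w | w ∈ C ∧ Γ.Adj v w}.ncard = s

/-- The coset graph `Cos(G,H,U)` on the left cosets of `H` in `G`:
`g₁H` and `g₂H` are adjacent iff `g₁⁻¹ g₂ ∈ U`. -/
def cosetGraph {G : Type*} [Group G] (H : Subgroup G) (U : Set G) : SimpleGraph (G ⧸ H) :=
  SimpleGraph.fromRel fun C D =>
    ∃ g₁ g₂ : G, QuotientGroup.mk g₁ = C ∧ QuotientGroup.mk g₂ = D ∧ g₁⁻¹ * g₂ ∈ U

/-- `U` is a valid connection set for a coset graph `Cos(G,H,U)`: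
inverse-closed, disjoint from `H`, and a union of double cosets of `H` (`HUH = U`). -/
def IsCosetGraphConnectionSet {G : Type*} [Group G] (H : Subgroup G) (U : Set G) : Prop :=
  U⁻¹ = U ∧ (H : Set G) ∩ U = ∅ ∧ (H : Set G) * U * (H : Set G) = U

/-- `A` is an `(r,s)`-regular set of the pair `(G,H)`: there is a coset graph
`Cos(G,H,U)` in which the set of left cosets of `H` in `A` is an `(r,s)`-regular set. -/
def IsRegularSetOfPair {G : Type*} [Group G] (H A : Subgroup G) (r s : ℕ) : Prop :=
  ∃ U : Set G, IsCosetGraphConnectionSet H U ∧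
    IsRegularVertexSet (cosetGraph H U)
      {C : G ⧸ H | ∃ a ∈ A, QuotientGroup.mk a = C} r s

/-- `A` is a perfect code of the pair `(G,H)` iff it is a `(0,1)`-regular set of `(G,H)`. -/
def IsPerfectCodeOfPair {G : Type*} [Group G] (H A : Subgroup G) : Prop :=
  IsRegularSetOfPair H A 0 1

/-- A subgroup `A` is an `(r,s)`-regular set of `G` iff it is an `(r,s)`-regular set of
the pair `(G,1)`, i.e. an `(r,s)`-regular set in some Cayley graph of `G`. -/
def IsRegularSetOfGroup {G : Type*} [Group G] (A : Subgroup G) (r s : ℕ) : Prop :=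
  IsRegularSetOfPair ⊥ A r s

/-- A subgroup `A` is a perfect code of `G` iff it is a `(0,1)`-regular set of `G`. -/
def IsPerfectCodeOfGroup {G : Type*} [Group G] (A : Subgroup G) : Prop :=
  IsRegularSetOfGroup A 0 1

/-- The conjugate subgroup `K^t = t⁻¹ K t`. -/
def conjSub {G : Type*} [Group G] (K : Subgroup G) (t : G) : Subgroup G :=
  K.map (MulAut.conj t⁻¹).toMonoidHom

/-!
For the cosets of `A`, being a perfect code of `Cos(G,H,U)` means: `U` misses `A`, and for every
`g ∉ A` the slice `U ∩ gA` is a single left coset `uH`. Since `HUH = U` and `A` is normal,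
`Hu ⊆ U ∩ gA = uH`, so `u` normalizes `H`; this gives `G = A·N_G(H)`, and when `x² ∈ A` the
element `u⁻¹ ∈ U` lies in `x⁻¹A = xA`, hence in `uH`, which forces `u² ∈ H`.

Conversely, pick for every coset `q` of `A` a representative `f q ∈ N_G(H)` with
`f q * f q⁻¹ ∈ H`: pair `q` with `q⁻¹` when they differ, and use the square condition when
`q = q⁻¹`. Then `U = ⋃_{q ≠ 1} (f q) H` is a connection set whose slices are exactly the
cosets `(f q) H`.
-/

namespace IsCosetGraphConnectionSet

variable {G : Type*} [Group G] {H : Subgroup G} {U : Set G}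

theorem mul_mul_mem (hU : IsCosetGraphConnectionSet H U) {h₁ g h₂ : G} (hh₁ : h₁ ∈ H)
    (hg : g ∈ U) (hh₂ : h₂ ∈ H) : h₁ * g * h₂ ∈ U :=
  hU.2.2 ▸ Set.mul_mem_mul (Set.mul_mem_mul hh₁ hg) hh₂

theorem inv_mem (hU : IsCosetGraphConnectionSet H U) {g : G} (hg : g ∈ U) : g⁻¹ ∈ U :=
  hU.1 ▸ Set.inv_mem_inv.2 hg

theorem notMem_of_mem (hU : IsCosetGraphConnectionSet H U) {g : G} (hg : g ∈ H) : g ∉ U :=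
  fun hgU => (hU.2.1 ▸ ⟨hg, hgU⟩ : g ∈ (∅ : Set G))

end IsCosetGraphConnectionSet

section CosetGraph

variable {G : Type*} [Group G] {H : Subgroup G} {U : Set G}

theorem cosetGraph_adj_mk (hU : IsCosetGraphConnectionSet H U) (x y : G) :
    (cosetGraph H U).Adj x y ↔ x⁻¹ * y ∈ U := by
  have rel : ∀ x y : G, (∃ g₁ g₂ : G, (g₁ : G ⧸ H) = x ∧ (g₂ : G ⧸ H) = y ∧ g₁⁻¹ * g₂ ∈ U) ↔
      x⁻¹ * y ∈ U := by
    refine fun x y => ⟨?_, fun h => ⟨x, y, rfl, rfl, h⟩⟩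
    rintro ⟨g₁, g₂, h₁, h₂, hg⟩
    rw [QuotientGroup.eq] at h₁ h₂
    convert hU.mul_mul_mem (H.inv_mem h₁) hg h₂ using 1
    group
  rw [cosetGraph, SimpleGraph.fromRel_adj, rel, rel]
  refine ⟨fun ⟨_, h⟩ => h.elim id fun h => by simpa using hU.inv_mem h, fun h => ⟨?_, .inl h⟩⟩
  exact fun e => hU.notMem_of_mem (QuotientGroup.eq.1 e) h

theorem cosetGraph_neighbors_in_image_mk (hU : IsCosetGraphConnectionSet H U) (A : Subgroup G)
    (x : G) :
    {w | w ∈ {C : G ⧸ H | ∃ a ∈ A, (a : G ⧸ H) = C} ∧ (cosetGraph H U).Adj x w} =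
      x • ((↑) '' (U ∩ x⁻¹ • (A : Set G)) : Set (G ⧸ H)) := by
  ext w
  constructor
  · rintro ⟨⟨a, ha, rfl⟩, hadj⟩
    refine ⟨_, ⟨x⁻¹ * a, ⟨(cosetGraph_adj_mk hU x a).1 hadj, ?_⟩, rfl⟩, ?_⟩
    · rwa [mem_leftCoset_iff, inv_inv, mul_inv_cancel_left]
    · simp
  · rintro ⟨_, ⟨z, ⟨hzU, hzA⟩, rfl⟩, rfl⟩
    rw [mem_leftCoset_iff, inv_inv] at hzA
    exact ⟨⟨x * z, hzA, rfl⟩, (cosetGraph_adj_mk hU x (x * z)).2 (by simpa using hzU)⟩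

theorem ncard_image_mk_eq_one_iff {S : Set G} (hS : ∀ s ∈ S, ∀ h ∈ H, s * h ∈ S) :
    ((↑) '' S : Set (G ⧸ H)).ncard = 1 ↔ ∃ u : G, S = u • (H : Set G) := by
  rw [Set.ncard_eq_one]
  constructor
  · rintro ⟨c, hc⟩
    obtain ⟨u, rfl⟩ := QuotientGroup.mk_surjective c
    obtain ⟨s, hs, hsu⟩ : (u : G ⧸ H) ∈ (↑) '' S := hc ▸ rfl
    refine ⟨u, Set.ext fun z => ⟨fun hz => ?_, fun hz => ?_⟩⟩
    · rw [mem_leftCoset_iff, SetLike.mem_coe, ← QuotientGroup.eq]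
      have hz' : (z : G ⧸ H) ∈ {(u : G ⧸ H)} := hc ▸ Set.mem_image_of_mem _ hz
      exact (Set.mem_singleton_iff.1 hz').symm
    · rw [mem_leftCoset_iff, SetLike.mem_coe, ← QuotientGroup.eq, ← hsu, QuotientGroup.eq] at hz
      simpa using hS s hs _ hz
  · rintro ⟨u, rfl⟩
    refine ⟨u, Set.eq_singleton_iff_unique_mem.2 ⟨⟨u, ⟨1, H.one_mem, mul_one u⟩, rfl⟩, ?_⟩⟩
    rintro _ ⟨z, hz, rfl⟩
    exact (QuotientGroup.eq.2 ((mem_leftCoset_iff u).1 hz)).symm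

theorem mk_mem_image_iff_of_le {A : Subgroup G} (hHA : H ≤ A) {x : G} :
    (x : G ⧸ H) ∈ (↑) '' (A : Set G) ↔ x ∈ A := by
  refine ⟨fun ⟨a, ha, e⟩ => ?_, fun h => ⟨x, h, rfl⟩⟩
  rw [QuotientGroup.eq] at e
  simpa using A.mul_mem ha (hHA e)

theorem isPerfectCodeOfPair_iff [Finite G] {A : Subgroup G} (hHA : H ≤ A) :
    IsPerfectCodeOfPair H A ↔ ∃ U : Set G, IsCosetGraphConnectionSet H U ∧
      Disjoint (A : Set G) U ∧ ∀ g ∉ A, ∃ u : G, U ∩ g • (A : Set G) = u • (H : Set G) := by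
  refine exists_congr fun U => and_congr_right fun hU => and_congr ?_ ?_
  · change (∀ v ∈ (QuotientGroup.mk : G → G ⧸ H) '' (A : Set G), _) ↔ _
    simp only [Set.forall_mem_image, cosetGraph_neighbors_in_image_mk hU, Set.ncard_smul_set,
      Set.disjoint_iff_inter_eq_empty]
    refine ⟨fun h => ?_, fun h a ha => ?_⟩
    · have h1 := h A.one_mem
      rwa [Set.ncard_eq_zero, Set.image_eq_empty, inv_one, one_smul, Set.inter_comm] at h1
    · rw [leftCoset_mem_leftCoset _ (A.inv_mem ha), Set.inter_comm, h, Set.image_empty,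
        Set.ncard_empty]
  · have hS (x : G) : ∀ s ∈ U ∩ x⁻¹ • (A : Set G), ∀ h ∈ H, s * h ∈ U ∩ x⁻¹ • (A : Set G) := by
      rintro s ⟨hsU, hsA⟩ h hh
      refine ⟨by simpa using hU.mul_mul_mem H.one_mem hsU hh, ?_⟩
      rw [mem_leftCoset_iff, ← mul_assoc] at *
      exact A.mul_mem hsA (hHA hh)
    simp only [QuotientGroup.mk_surjective.forall, cosetGraph_neighbors_in_image_mk hU,
      Set.ncard_smul_set, ncard_image_mk_eq_one_iff (hS _)]
    change (∀ x : G, (x : G ⧸ H) ∉ (QuotientGroup.mk : G → G ⧸ H) '' (A : Set G) → _) ↔ _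
    simp only [mk_mem_image_iff_of_le hHA]
    refine ⟨fun h g hg => ?_, fun h x hx => h x⁻¹ (by simpa using hx)⟩
    simpa using h g⁻¹ (by simpa using hg)

end CosetGraph

section PerfectCode

variable {G : Type*} [Group G] {H A : Subgroup G}

theorem mem_and_inv_mul_mem_of_inter_smul_eq {U : Set G} {g u : G}
    (hgu : U ∩ g • (A : Set G) = u • (H : Set G)) : u ∈ U ∧ g⁻¹ * u ∈ A := by
  obtain ⟨huU, huA⟩ : u ∈ U ∩ g • (A : Set G) := hgu ▸ ⟨1, H.one_mem, mul_one u⟩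
  exact ⟨huU, (mem_leftCoset_iff g).1 huA⟩

variable [A.Normal]

theorem mem_normalizer_of_inter_smul_eq [Finite G] (hHA : H ≤ A) {U : Set G}
    (hU : IsCosetGraphConnectionSet H U) {g u : G}
    (hgu : U ∩ g • (A : Set G) = u • (H : Set G)) : u ∈ Subgroup.normalizer (H : Set G) := by
  obtain ⟨huU, huA⟩ := mem_and_inv_mul_mem_of_inter_smul_eq hgu
  rw [← inv_mem_iff]
  refine Subgroup.mem_normalizer_fintype fun n hn => ?_
  have hnu : n * u ∈ U ∩ g • (A : Set G) := by
    refine ⟨by simpa using hU.mul_mul_mem hn huU H.one_mem, (mem_leftCoset_iff g).2 ?_⟩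
    rw [SetLike.mem_coe]
    convert A.mul_mem (Subgroup.Normal.conj_mem ‹_› n (hHA hn) g⁻¹) huA using 1
    group
  rw [hgu, mem_leftCoset_iff] at hnu
  simpa [mul_assoc] using hnu

theorem IsPerfectCodeOfPair.exists_connectionSet_normalizer [Finite G] (hHA : H ≤ A)
    (hP : IsPerfectCodeOfPair H A) : ∃ U : Set G, IsCosetGraphConnectionSet H U ∧
      ∀ g ∉ A, ∃ u ∈ Subgroup.normalizer (H : Set G), U ∩ g • (A : Set G) = u • (H : Set G) := by
  obtain ⟨U, hU, -, hcos⟩ := (isPerfectCodeOfPair_iff hHA).1 hP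
  refine ⟨U, hU, fun g hg => ?_⟩
  obtain ⟨u, hgu⟩ := hcos g hg
  exact ⟨u, mem_normalizer_of_inter_smul_eq hHA hU hgu, hgu⟩

theorem IsPerfectCodeOfPair.coe_mul_normalizer_eq_univ [Finite G] (hHA : H ≤ A)
    (hP : IsPerfectCodeOfPair H A) :
    (A : Set G) * (Subgroup.normalizer (H : Set G) : Set G) = Set.univ := by
  obtain ⟨U, -, hN⟩ := hP.exists_connectionSet_normalizer hHA
  refine Set.eq_univ_of_forall fun g => ?_
  by_cases hg : g ∈ A
  · exact ⟨g, hg, 1, one_mem _, mul_one g⟩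
  obtain ⟨u, hu, hgu⟩ := hN g hg
  have huA := (mem_and_inv_mul_mem_of_inter_smul_eq hgu).2
  refine ⟨g * u⁻¹, ?_, u, hu, inv_mul_cancel_right g u⟩
  simpa [mul_assoc] using Subgroup.Normal.conj_mem ‹_› _ (A.inv_mem huA) u

theorem IsPerfectCodeOfPair.exists_mul_mem_normalizer_sq_mem [Finite G] (hHA : H ≤ A)
    (hP : IsPerfectCodeOfPair H A) (x : G) (hx : x ^ 2 ∈ A) :
    ∃ b ∈ A, x * b ∈ Subgroup.normalizer (H : Set G) ∧ (x * b) ^ 2 ∈ H := by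
  by_cases hxA : x ∈ A
  · exact ⟨x⁻¹, A.inv_mem hxA, by simp [one_mem], by simp [one_mem]⟩
  obtain ⟨U, hU, hN⟩ := hP.exists_connectionSet_normalizer hHA
  obtain ⟨u, hu, hxu⟩ := hN x hxA
  obtain ⟨huU, huA⟩ := mem_and_inv_mul_mem_of_inter_smul_eq hxu
  have hu' : u⁻¹ ∈ U ∩ x • (A : Set G) := by
    refine ⟨hU.inv_mem huU, (mem_leftCoset_iff x).2 ?_⟩
    rw [SetLike.mem_coe]
    convert A.mul_mem (A.inv_mem hx) (Subgroup.Normal.conj_mem ‹_› _ (A.inv_mem huA) x) using 1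
    group
  rw [hxu, mem_leftCoset_iff] at hu'
  refine ⟨x⁻¹ * u, huA, by rwa [mul_inv_cancel_left], ?_⟩
  rw [mul_inv_cancel_left, sq, ← inv_inv (u * u), mul_inv_rev]
  exact H.inv_mem hu'

end PerfectCode

theorem exists_choice_inv_eq_inv {Q M : Type*} [InvolutiveInv Q] [InvolutiveInv M] (t : Q → M) :
    ∃ f : Q → M, (∀ q, f q = t q ∨ f q = (t q⁻¹)⁻¹) ∧ ∀ q, q⁻¹ ≠ q → f q⁻¹ = (f q)⁻¹ := by
  classical
  refine ⟨fun q => if WellOrderingRel q⁻¹ q then (t q⁻¹)⁻¹ else t q, fun q => ?_, fun q hq => ?_⟩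
  · dsimp only
    split_ifs <;> simp
  rcases trichotomous_of WellOrderingRel q q⁻¹ with h | h | h
  · simp [h, asymm h]
  · exact absurd h.symm hq
  · simp [h, asymm h]

section Construction

variable {G : Type*} [Group G] {H A : Subgroup G} [A.Normal]

theorem exists_normalizer_transversal
    (hG : (A : Set G) * (Subgroup.normalizer (H : Set G) : Set G) = Set.univ)
    (hsq : ∀ x : G, x ^ 2 ∈ A →
      ∃ b ∈ A, x * b ∈ Subgroup.normalizer (H : Set G) ∧ (x * b) ^ 2 ∈ H) :
    ∃ f : G ⧸ A → G, ∀ q, f q ∈ Subgroup.normalizer (H : Set G) ∧ (f q : G ⧸ A) = q ∧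
      f q * f q⁻¹ ∈ H := by
  have ht (q : G ⧸ A) : ∃ n ∈ Subgroup.normalizer (H : Set G), (n : G ⧸ A) = q ∧
      (q⁻¹ = q → n ^ 2 ∈ H) := by
    obtain ⟨x, rfl⟩ := QuotientGroup.mk_surjective q
    by_cases hq : (x : G ⧸ A)⁻¹ = x
    · have hx : x ^ 2 ∈ A := by
        rwa [← QuotientGroup.eq_one_iff, QuotientGroup.mk_pow, sq, ← inv_eq_iff_mul_eq_one]
      obtain ⟨b, hb, hn, hbH⟩ := hsq x hx
      refine ⟨x * b, hn, ?_, fun _ => hbH⟩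
      rw [QuotientGroup.mk_mul, (QuotientGroup.eq_one_iff b).2 hb, mul_one]
    · obtain ⟨a, ha, n, hn, rfl⟩ : x ∈ (A : Set G) * (Subgroup.normalizer (H : Set G) : Set G) :=
        hG ▸ Set.mem_univ x
      refine ⟨n, hn, ?_, fun h => absurd h hq⟩
      rw [QuotientGroup.mk_mul, (QuotientGroup.eq_one_iff a).2 ha, one_mul]
  choose t htN htq htsq using ht
  obtain ⟨f, hft, hfinv⟩ := exists_choice_inv_eq_inv t
  refine ⟨f, fun q => ⟨?_, ?_, ?_⟩⟩
  · rcases hft q with h | h <;> rw [h]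
    exacts [htN q, inv_mem (htN q⁻¹)]
  · rcases hft q with h | h <;> rw [h]
    exacts [htq q, by rw [QuotientGroup.mk_inv, htq, inv_inv]]
  by_cases hq : q⁻¹ = q
  · rw [hq]
    rcases hft q with h | h <;> rw [h]
    · simpa [sq] using htsq q hq
    · rw [hq, ← mul_inv_rev, ← sq]
      exact H.inv_mem (htsq q hq)
  · rw [hfinv q hq, mul_inv_cancel]
    exact H.one_mem

variable (H A) in
def transversalConnectionSet (f : G ⧸ A → G) : Set G :=
  {g | (g : G ⧸ A) ≠ 1 ∧ (f g)⁻¹ * g ∈ H}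

variable {f : G ⧸ A → G}

theorem isCosetGraphConnectionSet_transversalConnectionSet (hHA : H ≤ A)
    (hfN : ∀ q, f q ∈ Subgroup.normalizer (H : Set G)) (hfinv : ∀ q, f q * f q⁻¹ ∈ H) :
    IsCosetGraphConnectionSet H (transversalConnectionSet H A f) := by
  have hinv : ∀ g ∈ transversalConnectionSet H A f, g⁻¹ ∈ transversalConnectionSet H A f := by
    rintro g ⟨hg1, hgH⟩
    refine ⟨by simpa using hg1, ?_⟩
    rw [QuotientGroup.mk_inv]
    convert H.mul_mem (H.inv_mem (hfinv g))
      ((Subgroup.mem_normalizer_iff.1 (hfN g) _).1 (H.inv_mem hgH)) using 1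
    group
  refine ⟨Set.ext fun g => ⟨fun hg => by simpa using hinv _ hg, hinv g⟩, ?_, ?_⟩
  · refine Set.eq_empty_iff_forall_notMem.2 fun g ⟨hgH, hg1, _⟩ => hg1 ?_
    exact (QuotientGroup.eq_one_iff g).2 (hHA hgH)
  refine Set.Subset.antisymm ?_ fun g hg =>
    ⟨g, ⟨1, H.one_mem, g, hg, one_mul g⟩, 1, H.one_mem, mul_one g⟩
  rintro _ ⟨_, ⟨h₁, hh₁, g, ⟨hg1, hgH⟩, rfl⟩, h₂, hh₂, rfl⟩
  have hq : ((h₁ * g * h₂ : G) : G ⧸ A) = g := by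
    rw [QuotientGroup.mk_mul, QuotientGroup.mk_mul, (QuotientGroup.eq_one_iff h₁).2 (hHA hh₁),
      (QuotientGroup.eq_one_iff h₂).2 (hHA hh₂), one_mul, mul_one]
  refine ⟨hq ▸ hg1, ?_⟩
  rw [hq]
  convert H.mul_mem (H.mul_mem ((Subgroup.mem_normalizer_iff''.1 (hfN g) _).1 hh₁) hgH) hh₂
    using 1
  group

theorem disjoint_transversalConnectionSet :
    Disjoint (A : Set G) (transversalConnectionSet H A f) :=
  Set.disjoint_left.2 fun g hg hgU => hgU.1 ((QuotientGroup.eq_one_iff g).2 hg)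

theorem transversalConnectionSet_inter_smul (hHA : H ≤ A) (hfq : ∀ q, (f q : G ⧸ A) = q)
    {g : G} (hg : g ∉ A) :
    transversalConnectionSet H A f ∩ g • (A : Set G) = f g • (H : Set G) := by
  ext z
  rw [Set.mem_inter_iff, mem_leftCoset_iff, mem_leftCoset_iff, SetLike.mem_coe, SetLike.mem_coe,
    ← QuotientGroup.eq]
  constructor
  · rintro ⟨⟨-, hzH⟩, hgz⟩
    rwa [hgz]
  · intro hzH
    have hgz : (g : G ⧸ A) = z := by
      rw [← hfq g, QuotientGroup.eq]
      exact hHA hzH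
    refine ⟨⟨?_, by rwa [← hgz]⟩, hgz⟩
    rwa [← hgz, Ne, QuotientGroup.eq_one_iff]

theorem isPerfectCodeOfPair_of_mul_normalizer_eq_univ [Finite G] (hHA : H ≤ A)
    (hG : (A : Set G) * (Subgroup.normalizer (H : Set G) : Set G) = Set.univ)
    (hsq : ∀ x : G, x ^ 2 ∈ A →
      ∃ b ∈ A, x * b ∈ Subgroup.normalizer (H : Set G) ∧ (x * b) ^ 2 ∈ H) :
    IsPerfectCodeOfPair H A := by
  choose f hfN hfq hfinv using exists_normalizer_transversal hG hsq
  exact (isPerfectCodeOfPair_iff hHA).2 ⟨transversalConnectionSet H A f,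
    isCosetGraphConnectionSet_transversalConnectionSet hHA hfN hfinv,
    disjoint_transversalConnectionSet,
    fun g hg => ⟨f g, transversalConnectionSet_inter_smul hHA hfq hg⟩⟩

end Construction

/-- **Corollary D.** Let `H ≤ A ≤ G` with `A` normal in `G`. Then `A` is a perfect code
of `(G,H)` iff `G = A·N_G(H)` and for every `x ∈ G` with `x² ∈ A` there exists `b ∈ A`
such that `xb ∈ N_G(H)` and `(xb)² ∈ H`. -/
theorem corollaryD {G : Type*} [Group G] [Fintype G] (H A : Subgroup G)
    (hHA : H ≤ A) (hAnG : A.Normal) :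
    IsPerfectCodeOfPair H A ↔
      (A : Set G) * (Subgroup.normalizer (H : Set G) : Set G) = Set.univ ∧
        ∀ x : G, x ^ 2 ∈ A → ∃ b ∈ A, x * b ∈ Subgroup.normalizer (H : Set G) ∧ (x * b) ^ 2 ∈ H := by
  constructor
  · exact fun hP => ⟨hP.coe_mul_normalizer_eq_univ hHA, hP.exists_mul_mem_normalizer_sq_mem hHA⟩
  · rintro ⟨hG, hsq⟩
    exact isPerfectCodeOfPair_of_mul_normalizer_eq_univ hHA hG hsq
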